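/- Let (I, v) be the composition of rooted graphs (G, v) and (H, u), obtained from their disjoint union by adding the edge vu. Then: (1) B¹(I,v) = min{B¹(G,v), B¹(H,u), B¹¹(G,v) + B⁰(H,u)}; (2) B¹¹(I,v) = min{B¹¹(G,v), B⁰(H,u)}; (3) B⁰(I,v) = min{B⁰(G,v) + B¹¹(H,u), B⁰(G,v) + B⁰(H,u)}. -/

import Mathlib

open Set

/-- One step of the zero forcing process on the set `W` of white vertices:
a white vertex is removed (colored black) if it is the unique white neighbor
of some black vertex. -/
def zbStep {V : Type*} (G : SimpleGraph V) (W : Set V) : Set V :=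
  {w ∈ W | ¬ ∃ b ∉ W, G.Adj b w ∧ ∀ w' ∈ W, G.Adj b w' → w' = w}

/-- `W` is a zero blocking set: the zero forcing process started with white set `W`
never colors all of `W` black. -/
def IsZeroBlocking {V : Type*} (G : SimpleGraph V) (W : Set V) : Prop :=
  ∀ n : ℕ, ((zbStep G)^[n] W).Nonempty

/-- The zero blocking number `B(G)`. -/
noncomputable def zbNum {V : Type*} (G : SimpleGraph V) : ℕ∞ :=
  ⨅ (W : Set V) (_ : IsZeroBlocking G W), W.encard

/-- A final zero blocking set: a nonempty white set such that no black vertex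
has exactly one white neighbor. -/
def IsFinalZB {V : Type*} (G : SimpleGraph V) (W : Set V) : Prop :=
  W.Nonempty ∧ ∀ b ∉ W, ¬ ∃! w, w ∈ W ∧ G.Adj b w

/-- `B¹(G,v)`: minimum size of a final zero blocking set not containing `v`. -/
noncomputable def zbNum1 {V : Type*} (G : SimpleGraph V) (v : V) : ℕ∞ :=
  ⨅ (W : Set V) (_ : IsFinalZB G W ∧ v ∉ W), W.encard

/-- `B⁰(G,v)`: minimum size of a final zero blocking set containing `v`. -/
noncomputable def zbNum0 {V : Type*} (G : SimpleGraph V) (v : V) : ℕ∞ :=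
  ⨅ (W : Set V) (_ : IsFinalZB G W ∧ v ∈ W), W.encard

/-- A final `v`-zero blocking set: `v` is black, `v` has at least one white
neighbor, and every black vertex other than `v` does not have exactly one
white neighbor. -/
def IsFinalVZB {V : Type*} (G : SimpleGraph V) (v : V) (W : Set V) : Prop :=
  v ∉ W ∧ (∃ w ∈ W, G.Adj v w) ∧
    ∀ b ∉ W, b ≠ v → ¬ ∃! w, w ∈ W ∧ G.Adj b w

/-- `B¹¹(G,v)`: minimum size of a final `v`-zero blocking set. -/
noncomputable def zbNum11 {V : Type*} (G : SimpleGraph V) (v : V) : ℕ∞ :=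
  ⨅ (W : Set V) (_ : IsFinalVZB G v W), W.encard

/-- The composition of rooted graphs `(G,v)` and `(H,u)`: their disjoint union
together with the edge `vu`. -/
def rootedComp {V U : Type*} (G : SimpleGraph V) (v : V) (H : SimpleGraph U) (u : U) :
    SimpleGraph (V ⊕ U) where
  Adj x y := match x, y with
    | Sum.inl a, Sum.inl b => G.Adj a b
    | Sum.inr a, Sum.inr b => H.Adj a b
    | Sum.inl a, Sum.inr b => a = v ∧ b = u
    | Sum.inr a, Sum.inl b => a = u ∧ b = v
  symm := ⟨by rintro (a | a) (b | b) h <;> simp_all [SimpleGraph.adj_comm]⟩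
  loopless := ⟨by rintro (a | a) h <;> simp_all⟩


section Aux
variable {V U : Type*} {G : SimpleGraph V} {v : V} {H : SimpleGraph U} {u : U}

lemma le_biInf_add_biInf {α β : Type*} {P : Set α → Prop} {Q : Set β → Prop} {c : ℕ∞}
    (h : ∀ A, P A → ∀ B, Q B → c ≤ A.encard + B.encard) :
    c ≤ (⨅ (A : Set α) (_ : P A), A.encard) + (⨅ (B : Set β) (_ : Q B), B.encard) := by
  by_cases hP : ∃ A, P A
  · by_cases hQ : ∃ B, Q B
    · obtain ⟨A, hA⟩ := hP
      obtain ⟨B, hB⟩ := hQ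
      haveI : Nonempty {A : Set α // P A} := ⟨⟨A, hA⟩⟩
      haveI : Nonempty {B : Set β // Q B} := ⟨⟨B, hB⟩⟩
      have e1 : (⨅ (A : Set α) (_ : P A), A.encard)
          = ⨅ p : {A : Set α // P A}, (p.1).encard := iInf_subtype'
      have e2 : (⨅ (B : Set β) (_ : Q B), B.encard)
          = ⨅ q : {B : Set β // Q B}, (q.1).encard := iInf_subtype'
      obtain ⟨p, hp⟩ := ciInf_mem (fun p : {A : Set α // P A} => (p.1).encard)
      obtain ⟨q, hq⟩ := ciInf_mem (fun q : {B : Set β // Q B} => (q.1).encard)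
      rw [e1, e2, ← hp, ← hq]
      exact h p.1 p.2 q.1 q.2
    · have ht : (⨅ (B : Set β) (_ : Q B), B.encard) = ⊤ := by
        simp only [iInf_eq_top]
        intro B hB
        exact absurd ⟨B, hB⟩ hQ
      rw [ht, add_top]
      exact le_top
  · have ht : (⨅ (A : Set α) (_ : P A), A.encard) = ⊤ := by
      simp only [iInf_eq_top]
      intro A hA
      exact absurd ⟨A, hA⟩ hP
    rw [ht, top_add]
    exact le_top

lemma encard_union_images (A : Set V) (B : Set U) :
    (Sum.inl '' A ∪ Sum.inr '' B : Set (V ⊕ U)).encard = A.encard + B.encard := by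
  rw [Set.encard_union_eq, Sum.inl_injective.encard_image, Sum.inr_injective.encard_image]
  rw [Set.disjoint_left]
  rintro x ⟨a, -, rfl⟩ ⟨b, -, hb⟩
  exact absurd hb (by simp)

lemma encard_sum_decomp (W : Set (V ⊕ U)) :
    W.encard = (Sum.inl ⁻¹' W).encard + (Sum.inr ⁻¹' W).encard := by
  rw [← encard_union_images]
  congr 1
  ext x
  rcases x with a | b <;> simp

lemma rc_adj_inl_inr {a : V} {b : U} :
    (rootedComp G v H u).Adj (Sum.inl a) (Sum.inr b) ↔ a = v ∧ b = u := Iff.rfl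

lemma rc_adj_inr_inl {a : U} {b : V} :
    (rootedComp G v H u).Adj (Sum.inr a) (Sum.inl b) ↔ a = u ∧ b = v := Iff.rfl

lemma exu_inl {W : Set (V ⊕ U)} {a : V} (h : a ≠ v ∨ Sum.inr u ∉ W) :
    (∃! w, w ∈ W ∧ (rootedComp G v H u).Adj (Sum.inl a) w) ↔
      (∃! w, Sum.inl w ∈ W ∧ G.Adj a w) := by
  constructor
  · rintro ⟨w, ⟨hwW, hadj⟩, huni⟩
    rcases w with w' | b
    · exact ⟨w', ⟨hwW, hadj⟩, fun x ⟨hx, hxa⟩ => Sum.inl.inj (huni (Sum.inl x) ⟨hx, hxa⟩)⟩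
    · obtain ⟨rfl, rfl⟩ := rc_adj_inl_inr.1 hadj
      rcases h with h | h
      · exact absurd rfl h
      · exact absurd hwW h
  · rintro ⟨w, ⟨hwW, hadj⟩, huni⟩
    refine ⟨Sum.inl w, ⟨hwW, hadj⟩, ?_⟩
    rintro (x | x) ⟨hx, hxa⟩
    · exact congrArg Sum.inl (huni x ⟨hx, hxa⟩)
    · obtain ⟨rfl, rfl⟩ := rc_adj_inl_inr.1 hxa
      rcases h with h | h
      · exact absurd rfl h
      · exact absurd hx h

lemma exu_inr {W : Set (V ⊕ U)} {b : U} (h : b ≠ u ∨ Sum.inl v ∉ W) :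
    (∃! w, w ∈ W ∧ (rootedComp G v H u).Adj (Sum.inr b) w) ↔
      (∃! w, Sum.inr w ∈ W ∧ H.Adj b w) := by
  constructor
  · rintro ⟨w, ⟨hwW, hadj⟩, huni⟩
    rcases w with a | w'
    · obtain ⟨rfl, rfl⟩ := rc_adj_inr_inl.1 hadj
      rcases h with h | h
      · exact absurd rfl h
      · exact absurd hwW h
    · exact ⟨w', ⟨hwW, hadj⟩, fun x ⟨hx, hxa⟩ => Sum.inr.inj (huni (Sum.inr x) ⟨hx, hxa⟩)⟩
  · rintro ⟨w, ⟨hwW, hadj⟩, huni⟩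
    refine ⟨Sum.inr w, ⟨hwW, hadj⟩, ?_⟩
    rintro (x | x) ⟨hx, hxa⟩
    · obtain ⟨rfl, rfl⟩ := rc_adj_inr_inl.1 hxa
      rcases h with h | h
      · exact absurd rfl h
      · exact absurd hx h
    · exact congrArg Sum.inr (huni x ⟨hx, hxa⟩)

lemma exu_inl_v {W : Set (V ⊕ U)} (h : Sum.inr u ∈ W) :
    (∃! w, w ∈ W ∧ (rootedComp G v H u).Adj (Sum.inl v) w) ↔
      ∀ w, Sum.inl w ∈ W → ¬ G.Adj v w := by
  constructor
  · rintro ⟨w, ⟨hwW, hadj⟩, huni⟩ x hx hxa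
    have h1 := huni (Sum.inr u) ⟨h, rc_adj_inl_inr.2 ⟨rfl, rfl⟩⟩
    have h2 := huni (Sum.inl x) ⟨hx, hxa⟩
    subst h2
    simp at h1
  · intro hno
    refine ⟨Sum.inr u, ⟨h, rc_adj_inl_inr.2 ⟨rfl, rfl⟩⟩, ?_⟩
    rintro (x | x) ⟨hx, hxa⟩
    · exact absurd hxa (hno x hx)
    · obtain ⟨-, rfl⟩ := rc_adj_inl_inr.1 hxa
      rfl

lemma exu_inr_u {W : Set (V ⊕ U)} (h : Sum.inl v ∈ W) :
    (∃! w, w ∈ W ∧ (rootedComp G v H u).Adj (Sum.inr u) w) ↔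
      ∀ w, Sum.inr w ∈ W → ¬ H.Adj u w := by
  constructor
  · rintro ⟨w, ⟨hwW, hadj⟩, huni⟩ x hx hxa
    have h1 := huni (Sum.inl v) ⟨h, rc_adj_inr_inl.2 ⟨rfl, rfl⟩⟩
    have h2 := huni (Sum.inr x) ⟨hx, hxa⟩
    subst h2
    simp at h1
  · intro hno
    refine ⟨Sum.inl v, ⟨h, rc_adj_inr_inl.2 ⟨rfl, rfl⟩⟩, ?_⟩
    rintro (x | x) ⟨hx, hxa⟩
    · obtain ⟨-, rfl⟩ := rc_adj_inr_inl.1 hxa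
      rfl
    · exact absurd hxa (hno x hx)

end Aux

section Aux2
variable {V U : Type*} {G : SimpleGraph V} {v : V} {H : SimpleGraph U} {u : U}

lemma exu_inl_congr {W : Set (V ⊕ U)} (A : Set V) (h : ∀ w, (Sum.inl w : V ⊕ U) ∈ W ↔ w ∈ A)
    {p : V → Prop} : (∃! w, Sum.inl w ∈ W ∧ p w) ↔ (∃! w, w ∈ A ∧ p w) :=
  existsUnique_congr fun w => and_congr_left fun _ => h w

lemma exu_inr_congr {W : Set (V ⊕ U)} (B : Set U) (h : ∀ w, (Sum.inr w : V ⊕ U) ∈ W ↔ w ∈ B)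
    {p : U → Prop} : (∃! w, Sum.inr w ∈ W ∧ p w) ↔ (∃! w, w ∈ B ∧ p w) :=
  existsUnique_congr fun w => and_congr_left fun _ => h w

end Aux2

theorem zbNum_rootedComp {V U : Type*} [Fintype V] [Fintype U]
    (G : SimpleGraph V) (v : V) (H : SimpleGraph U) (u : U) :
    zbNum1 (rootedComp G v H u) (Sum.inl v) =
      min (zbNum1 G v) (min (zbNum1 H u) (zbNum11 G v + zbNum0 H u)) ∧
    zbNum11 (rootedComp G v H u) (Sum.inl v) = min (zbNum11 G v) (zbNum0 H u) ∧
    zbNum0 (rootedComp G v H u) (Sum.inl v) =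
      min (zbNum0 G v + zbNum11 H u) (zbNum0 G v + zbNum0 H u) := by
  refine ⟨?_, ?_, ?_⟩
  · -- Part 1
    simp only [zbNum1, zbNum11, zbNum0]
    apply le_antisymm
    · refine le_min ?_ (le_min ?_ ?_)
      · refine le_iInf₂ fun A hA => ?_
        have hprop : IsFinalZB (rootedComp G v H u) (Sum.inl '' A) ∧
            Sum.inl v ∉ (Sum.inl '' A : Set (V ⊕ U)) := by
          refine ⟨⟨?_, ?_⟩, by simp [hA.2]⟩
          · obtain ⟨w, hw⟩ := hA.1.1
            exact ⟨Sum.inl w, ⟨w, hw, rfl⟩⟩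
          · rintro (a | c) hb
            · rw [exu_inl (Or.inr (by simp)), exu_inl_congr A (fun w => by simp)]
              exact hA.1.2 a (fun h => hb ⟨a, h, rfl⟩)
            · rw [exu_inr (Or.inr (by simp [hA.2]))]
              rintro ⟨w, ⟨hw, -⟩, -⟩
              simp at hw
        exact iInf₂_le_of_le _ hprop (le_of_eq (Sum.inl_injective.encard_image A))
      · refine le_iInf₂ fun B hB => ?_
        have hprop : IsFinalZB (rootedComp G v H u) (Sum.inr '' B) ∧
            Sum.inl v ∉ (Sum.inr '' B : Set (V ⊕ U)) := by
          refine ⟨⟨?_, ?_⟩, by simp⟩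
          · obtain ⟨w, hw⟩ := hB.1.1
            exact ⟨Sum.inr w, ⟨w, hw, rfl⟩⟩
          · rintro (a | c) hb
            · rw [exu_inl (Or.inr (by simp [hB.2]))]
              rintro ⟨w, ⟨hw, -⟩, -⟩
              simp at hw
            · rw [exu_inr (Or.inr (by simp)), exu_inr_congr B (fun w => by simp)]
              exact hB.1.2 c (fun h => hb ⟨c, h, rfl⟩)
        exact iInf₂_le_of_le _ hprop (le_of_eq (Sum.inr_injective.encard_image B))
      · apply le_biInf_add_biInf
        intro A hA B hB
        have hprop : IsFinalZB (rootedComp G v H u) (Sum.inl '' A ∪ Sum.inr '' B) ∧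
            Sum.inl v ∉ (Sum.inl '' A ∪ Sum.inr '' B : Set (V ⊕ U)) := by
          refine ⟨⟨⟨Sum.inr u, Set.mem_union_right _ ⟨u, hB.2, rfl⟩⟩, ?_⟩, by simp [hA.1]⟩
          rintro (a | c) hb
          · by_cases hav : a = v
            · subst hav
              rw [exu_inl_v (show (Sum.inr u : V ⊕ U) ∈ Sum.inl '' A ∪ Sum.inr '' B from Set.mem_union_right _ ⟨u, hB.2, rfl⟩)]
              push_neg
              obtain ⟨w, hw, hadj⟩ := hA.2.1
              exact ⟨w, Set.mem_union_left _ ⟨w, hw, rfl⟩, hadj⟩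
            · rw [exu_inl (Or.inl hav), exu_inl_congr A (fun w => by simp)]
              exact hA.2.2 a (fun h => hb (Set.mem_union_left _ ⟨a, h, rfl⟩)) hav
          · have hcu : c ≠ u := by rintro rfl; exact hb (Set.mem_union_right _ ⟨_, hB.2, rfl⟩)
            rw [exu_inr (Or.inl hcu), exu_inr_congr B (fun w => by simp)]
            exact hB.1.2 c (fun h => hb (Set.mem_union_right _ ⟨c, h, rfl⟩))
        exact iInf₂_le_of_le _ hprop (le_of_eq (encard_union_images A B))
    · refine le_iInf₂ fun W hW => ?_
      rw [encard_sum_decomp W]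
      by_cases hu : Sum.inr u ∈ W
      · have hpA : IsFinalVZB G v (Sum.inl ⁻¹' W) := by
          refine ⟨hW.2, ?_, ?_⟩
          · have h1 := hW.1.2 (Sum.inl v) hW.2
            rw [exu_inl_v hu] at h1
            push_neg at h1
            exact h1
          · intro a ha hav
            have h1 := hW.1.2 (Sum.inl a) ha
            rw [exu_inl (Or.inl hav)] at h1
            exact h1
        have hpB : IsFinalZB H (Sum.inr ⁻¹' W) ∧ u ∈ Sum.inr ⁻¹' W := by
          refine ⟨⟨⟨u, hu⟩, fun c hc => ?_⟩, hu⟩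
          have hcu : c ≠ u := by rintro rfl; exact hc hu
          have h1 := hW.1.2 (Sum.inr c) hc
          rw [exu_inr (Or.inl hcu)] at h1
          exact h1
        exact le_trans (le_trans (min_le_right _ _) (min_le_right _ _))
          (add_le_add (iInf₂_le_of_le _ hpA le_rfl) (iInf₂_le_of_le _ hpB le_rfl))
      · obtain ⟨x, hx⟩ := hW.1.1
        rcases x with a | c
        · have hpA : IsFinalZB G (Sum.inl ⁻¹' W) ∧ v ∉ Sum.inl ⁻¹' W := by
            refine ⟨⟨⟨a, hx⟩, fun a' ha' => ?_⟩, hW.2⟩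
            have h1 := hW.1.2 (Sum.inl a') ha'
            rw [exu_inl (Or.inr hu)] at h1
            exact h1
          exact le_trans (min_le_left _ _) (iInf₂_le_of_le _ hpA le_self_add)
        · have hpB : IsFinalZB H (Sum.inr ⁻¹' W) ∧ u ∉ Sum.inr ⁻¹' W := by
            refine ⟨⟨⟨c, hx⟩, fun c' hc' => ?_⟩, hu⟩
            have h1 := hW.1.2 (Sum.inr c') hc'
            rw [exu_inr (Or.inr hW.2)] at h1
            exact h1
          exact le_trans (le_trans (min_le_right _ _) (min_le_left _ _))
            (iInf₂_le_of_le _ hpB le_add_self)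
  · -- Part 2
    simp only [zbNum11, zbNum0]
    apply le_antisymm
    · refine le_min ?_ ?_
      · refine le_iInf₂ fun A hA => ?_
        have hprop : IsFinalVZB (rootedComp G v H u) (Sum.inl v) (Sum.inl '' A) := by
          refine ⟨by simp [hA.1], ?_, ?_⟩
          · obtain ⟨w, hw, hadj⟩ := hA.2.1
            exact ⟨Sum.inl w, ⟨w, hw, rfl⟩, hadj⟩
          · rintro (a | c) hb hbv
            · have hav : a ≠ v := by rintro rfl; exact hbv rfl
              rw [exu_inl (Or.inr (by simp)), exu_inl_congr A (fun w => by simp)]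
              exact hA.2.2 a (fun h => hb ⟨a, h, rfl⟩) hav
            · rw [exu_inr (Or.inr (by simp [hA.1]))]
              rintro ⟨w, ⟨hw, -⟩, -⟩
              simp at hw
        exact iInf₂_le_of_le _ hprop (le_of_eq (Sum.inl_injective.encard_image A))
      · refine le_iInf₂ fun B hB => ?_
        have hprop : IsFinalVZB (rootedComp G v H u) (Sum.inl v) (Sum.inr '' B) := by
          refine ⟨by simp, ?_, ?_⟩
          · exact ⟨Sum.inr u, ⟨u, hB.2, rfl⟩, rc_adj_inl_inr.2 ⟨rfl, rfl⟩⟩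
          · rintro (a | c) hb hbv
            · have hav : a ≠ v := by rintro rfl; exact hbv rfl
              rw [exu_inl (Or.inl hav)]
              rintro ⟨w, ⟨hw, -⟩, -⟩
              simp at hw
            · have hcu : c ≠ u := by rintro rfl; exact hb ⟨_, hB.2, rfl⟩
              rw [exu_inr (Or.inl hcu), exu_inr_congr B (fun w => by simp)]
              exact hB.1.2 c (fun h => hb ⟨c, h, rfl⟩)
        exact iInf₂_le_of_le _ hprop (le_of_eq (Sum.inr_injective.encard_image B))
    · refine le_iInf₂ fun W hW => ?_
      rw [encard_sum_decomp W]
      by_cases hu : Sum.inr u ∈ W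
      · have hpB : IsFinalZB H (Sum.inr ⁻¹' W) ∧ u ∈ Sum.inr ⁻¹' W := by
          refine ⟨⟨⟨u, hu⟩, fun c hc => ?_⟩, hu⟩
          have hcu : c ≠ u := by rintro rfl; exact hc hu
          have h1 := hW.2.2 (Sum.inr c) hc (by simp)
          rw [exu_inr (Or.inl hcu)] at h1
          exact h1
        exact le_trans (min_le_right _ _) (iInf₂_le_of_le _ hpB le_add_self)
      · have hpA : IsFinalVZB G v (Sum.inl ⁻¹' W) := by
          refine ⟨hW.1, ?_, ?_⟩
          · obtain ⟨w, hw, hadj⟩ := hW.2.1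
            rcases w with w' | b
            · exact ⟨w', hw, hadj⟩
            · obtain ⟨-, rfl⟩ := rc_adj_inl_inr.1 hadj
              exact absurd hw hu
          · intro a ha hav
            have h1 := hW.2.2 (Sum.inl a) ha (by simp [hav])
            rw [exu_inl (Or.inr hu)] at h1
            exact h1
        exact le_trans (min_le_left _ _) (iInf₂_le_of_le _ hpA le_self_add)
  · -- Part 3
    simp only [zbNum0, zbNum11]
    apply le_antisymm
    · refine le_min ?_ ?_
      · apply le_biInf_add_biInf
        intro A hA B hB
        have hprop : IsFinalZB (rootedComp G v H u) (Sum.inl '' A ∪ Sum.inr '' B) ∧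
            Sum.inl v ∈ (Sum.inl '' A ∪ Sum.inr '' B : Set (V ⊕ U)) := by
          refine ⟨⟨⟨Sum.inl v, Set.mem_union_left _ ⟨v, hA.2, rfl⟩⟩, ?_⟩, Set.mem_union_left _ ⟨v, hA.2, rfl⟩⟩
          rintro (a | c) hb
          · have hav : a ≠ v := by rintro rfl; exact hb (Set.mem_union_left _ ⟨_, hA.2, rfl⟩)
            rw [exu_inl (Or.inl hav), exu_inl_congr A (fun w => by simp)]
            exact hA.1.2 a (fun h => hb (Set.mem_union_left _ ⟨a, h, rfl⟩))
          · by_cases hcu : c = u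
            · subst hcu
              rw [exu_inr_u (show (Sum.inl v : V ⊕ U) ∈ Sum.inl '' A ∪ Sum.inr '' B from Set.mem_union_left _ ⟨v, hA.2, rfl⟩)]
              intro hall
              obtain ⟨w, hw, hadj⟩ := hB.2.1
              exact hall w (Set.mem_union_right _ ⟨w, hw, rfl⟩) hadj
            · rw [exu_inr (Or.inl hcu), exu_inr_congr B (fun w => by simp)]
              exact hB.2.2 c (fun h => hb (Set.mem_union_right _ ⟨c, h, rfl⟩)) hcu
        exact iInf₂_le_of_le _ hprop (le_of_eq (encard_union_images A B))
      · apply le_biInf_add_biInf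
        intro A hA B hB
        have hprop : IsFinalZB (rootedComp G v H u) (Sum.inl '' A ∪ Sum.inr '' B) ∧
            Sum.inl v ∈ (Sum.inl '' A ∪ Sum.inr '' B : Set (V ⊕ U)) := by
          refine ⟨⟨⟨Sum.inl v, Set.mem_union_left _ ⟨v, hA.2, rfl⟩⟩, ?_⟩, Set.mem_union_left _ ⟨v, hA.2, rfl⟩⟩
          rintro (a | c) hb
          · have hav : a ≠ v := by rintro rfl; exact hb (Set.mem_union_left _ ⟨_, hA.2, rfl⟩)
            rw [exu_inl (Or.inl hav), exu_inl_congr A (fun w => by simp)]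
            exact hA.1.2 a (fun h => hb (Set.mem_union_left _ ⟨a, h, rfl⟩))
          · have hcu : c ≠ u := by rintro rfl; exact hb (Set.mem_union_right _ ⟨_, hB.2, rfl⟩)
            rw [exu_inr (Or.inl hcu), exu_inr_congr B (fun w => by simp)]
            exact hB.1.2 c (fun h => hb (Set.mem_union_right _ ⟨c, h, rfl⟩))
        exact iInf₂_le_of_le _ hprop (le_of_eq (encard_union_images A B))
    · refine le_iInf₂ fun W hW => ?_
      rw [encard_sum_decomp W]
      have hpA : IsFinalZB G (Sum.inl ⁻¹' W) ∧ v ∈ Sum.inl ⁻¹' W := by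
        refine ⟨⟨⟨v, hW.2⟩, fun a ha => ?_⟩, hW.2⟩
        have hav : a ≠ v := by rintro rfl; exact ha hW.2
        have h1 := hW.1.2 (Sum.inl a) ha
        rw [exu_inl (Or.inl hav)] at h1
        exact h1
      by_cases hu : Sum.inr u ∈ W
      · have hpB : IsFinalZB H (Sum.inr ⁻¹' W) ∧ u ∈ Sum.inr ⁻¹' W := by
          refine ⟨⟨⟨u, hu⟩, fun c hc => ?_⟩, hu⟩
          have hcu : c ≠ u := by rintro rfl; exact hc hu
          have h1 := hW.1.2 (Sum.inr c) hc
          rw [exu_inr (Or.inl hcu)] at h1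
          exact h1
        exact le_trans (min_le_right _ _) (add_le_add (iInf₂_le_of_le _ hpA le_rfl) (iInf₂_le_of_le _ hpB le_rfl))
      · have hpB : IsFinalVZB H u (Sum.inr ⁻¹' W) := by
          refine ⟨hu, ?_, ?_⟩
          · have h1 := hW.1.2 (Sum.inr u) hu
            rw [exu_inr_u hW.2] at h1
            push_neg at h1
            exact h1
          · intro c hc hcu
            have h1 := hW.1.2 (Sum.inr c) hc
            rw [exu_inr (Or.inl hcu)] at h1
            exact h1
        exact le_trans (min_le_left _ _) (add_le_add (iInf₂_le_of_le _ hpA le_rfl) (iInf₂_le_of_le _ hpB le_rfl))
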